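/- arXiv:2304.01497 — 2 statements merged into one kernel-verified Lean document; each statement's English description precedes it below -/
import Mathlib

section
/- Let φ be holomorphic on a neighborhood of the closed unit disc with φ(𝔻) ⊆ 𝔻 and suppose 𝕋 ⊄ φ(closure(𝔻)). Then C_φ does not have closed range on the Dirichlet space: there exists a sequence f_k ∈ D(𝔻) with ‖C_φ f_k‖/‖f_k‖ → 0. -/
/-!
Pick ζ on the circle outside φ(closure 𝔻) and let g(z) = (1 + ζ̄z)/2, which has modulus < 1 on
the closed disc except at ζ. By compactness |g ∘ φ| ≤ r < 1 and |φ'| ≤ M on the closed disc, so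
the Dirichlet norm of g^(k+1) ∘ φ is O(k² r^(2k)). On the other hand the derivative of g^(k+1)
exceeds (k+1)s^k/2 on the nonempty open set {|g| > s} ∩ 𝔻, so the norm of g^(k+1) is at least
of order k² s^(2k). Taking r < s < 1, the quotient decays like (r/s)^(2k).
-/

open MeasureTheory Metric Complex Filter Set
open scoped ENNReal NNReal

noncomputable section

/-- The open unit disc in ℂ. -/
def UD : Set ℂ := Metric.ball 0 1

/-- Pseudo-hyperbolic metric. -/
def rho (z w : ℂ) : ℝ := ‖(z - w) / (1 - (starRingEnd ℂ) z * w)‖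

/-- Bergman-metric ball D(z,r). -/
def bergmanBall (z : ℂ) (r : ℝ) : Set ℂ :=
  {w ∈ UD | (1/2) * Real.log ((1 + rho z w) / (1 - rho z w)) < r}

/-- Counting function n_φ. -/
def countFn (φ : ℂ → ℂ) (w : ℂ) : ℕ := Set.ncard {z ∈ UD | φ z = w}

/-- Squared Dirichlet norm (as an extended real). -/
def Dnorm2 (f : ℂ → ℂ) : ℝ≥0∞ :=
  (‖f 0‖₊ : ℝ≥0∞) ^ 2 + ∫⁻ z in UD, (‖deriv f z‖₊ : ℝ≥0∞) ^ 2

open scoped Topology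

lemma closure_UD : closure UD = closedBall 0 1 := closure_ball 0 one_ne_zero

lemma sq_nnnorm_eq_ofReal {E : Type*} [SeminormedAddGroup E] (x : E) :
    (‖x‖₊ : ℝ≥0∞) ^ 2 = ENNReal.ofReal (‖x‖ ^ 2) := by
  rw [ENNReal.ofReal_pow (norm_nonneg x), ofReal_norm, enorm_eq_nnnorm]

lemma Dnorm2_le {f : ℂ → ℂ} {b₀ b : ℝ} (h₀ : ‖f 0‖ ≤ b₀) (h : ∀ z ∈ UD, ‖deriv f z‖ ≤ b) :
    Dnorm2 f ≤ ENNReal.ofReal (b₀ ^ 2) + ENNReal.ofReal (b ^ 2) * volume UD := by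
  unfold Dnorm2
  gcongr ?_ + ?_
  · rw [sq_nnnorm_eq_ofReal]
    gcongr
  · calc ∫⁻ z in UD, (‖deriv f z‖₊ : ℝ≥0∞) ^ 2
        ≤ ∫⁻ _ in UD, ENNReal.ofReal (b ^ 2) :=
          setLIntegral_mono' measurableSet_ball fun z hz => by
            rw [sq_nnnorm_eq_ofReal]
            gcongr
            exact h z hz
      _ = ENNReal.ofReal (b ^ 2) * volume UD := setLIntegral_const _ _

lemma Dnorm2_ne_top {f : ℂ → ℂ} {b₀ b : ℝ} (h₀ : ‖f 0‖ ≤ b₀)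
    (h : ∀ z ∈ UD, ‖deriv f z‖ ≤ b) : Dnorm2 f ≠ ⊤ :=
  ((Dnorm2_le h₀ h).trans_lt
    (ENNReal.add_lt_top.2 ⟨ENNReal.ofReal_lt_top,
      ENNReal.mul_lt_top ENNReal.ofReal_lt_top measure_ball_lt_top⟩)).ne

lemma toReal_Dnorm2_le {f : ℂ → ℂ} {b₀ b : ℝ} (h₀ : ‖f 0‖ ≤ b₀)
    (h : ∀ z ∈ UD, ‖deriv f z‖ ≤ b) :
    (Dnorm2 f).toReal ≤ b₀ ^ 2 + b ^ 2 * (volume UD).toReal := by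
  have hUD : volume UD ≠ ⊤ := measure_ball_lt_top.ne
  calc (Dnorm2 f).toReal
      ≤ (ENNReal.ofReal (b₀ ^ 2) + ENNReal.ofReal (b ^ 2) * volume UD).toReal :=
        ENNReal.toReal_mono (by finiteness) (Dnorm2_le h₀ h)
    _ = b₀ ^ 2 + b ^ 2 * (volume UD).toReal := by
        rw [ENNReal.toReal_add (by finiteness) (by finiteness), ENNReal.toReal_mul,
          ENNReal.toReal_ofReal (sq_nonneg _), ENNReal.toReal_ofReal (sq_nonneg _)]

lemma le_toReal_Dnorm2 {f : ℂ → ℂ} {E : Set ℂ} {b : ℝ} (hf : Dnorm2 f ≠ ⊤)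
    (hE : MeasurableSet E) (hEU : E ⊆ UD) (hb : 0 ≤ b) (h : ∀ z ∈ E, b ≤ ‖deriv f z‖) :
    b ^ 2 * (volume E).toReal ≤ (Dnorm2 f).toReal := by
  have hle : ENNReal.ofReal (b ^ 2) * volume E ≤ Dnorm2 f :=
    calc ENNReal.ofReal (b ^ 2) * volume E
        = ∫⁻ _ in E, ENNReal.ofReal (b ^ 2) := (setLIntegral_const _ _).symm
      _ ≤ ∫⁻ z in E, (‖deriv f z‖₊ : ℝ≥0∞) ^ 2 :=
          setLIntegral_mono' hE fun z hz => by
            rw [sq_nnnorm_eq_ofReal]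
            gcongr
            exact h z hz
      _ ≤ ∫⁻ z in UD, (‖deriv f z‖₊ : ℝ≥0∞) ^ 2 := lintegral_mono_set hEU
      _ ≤ Dnorm2 f := le_add_self
  simpa [ENNReal.toReal_mul, ENNReal.toReal_ofReal (sq_nonneg b)] using
    ENNReal.toReal_mono hf hle

lemma Dnorm2_ne_zero {f : ℂ → ℂ} (h : f 0 ≠ 0) : Dnorm2 f ≠ 0 := fun h0 =>
  pow_ne_zero 2 (ENNReal.coe_ne_zero.2 (nnnorm_ne_zero_iff.2 h)) (add_eq_zero.1 h0).1

lemma tendsto_div_zero_of_le_geometric {N D u : ℕ → ℝ} {a B r s : ℝ} (hN₀ : ∀ k, 0 ≤ N k)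
    (hN : ∀ k, N k ≤ u k * B * r ^ k) (hD : ∀ k, u k * a * s ^ k ≤ D k) (hu : ∀ k, 0 < u k)
    (ha : 0 < a) (hr : 0 ≤ r) (hrs : r < s) :
    Tendsto (fun k => N k / D k) atTop (𝓝 0) := by
  have hs : 0 < s := hr.trans_lt hrs
  have hDpos : ∀ k, 0 < u k * a * s ^ k := fun k => by have := hu k; positivity
  have hbound : ∀ k, N k / D k ≤ B / a * (r / s) ^ k := fun k =>
    calc N k / D k ≤ u k * B * r ^ k / (u k * a * s ^ k) :=
          div_le_div₀ ((hN₀ k).trans (hN k)) (hN k) (hDpos k) (hD k)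
      _ = B / a * (r / s) ^ k := by
          have := (hu k).ne'
          rw [div_pow]
          field_simp
  have hgeom := (tendsto_pow_atTop_nhds_zero_of_lt_one (div_nonneg hr hs.le)
    ((div_lt_one hs).2 hrs)).const_mul (B / a)
  rw [mul_zero] at hgeom
  exact squeeze_zero (fun k => div_nonneg (hN₀ k) ((hDpos k).le.trans (hD k))) hbound hgeom

def peak (ζ z : ℂ) : ℂ := (1 + starRingEnd ℂ ζ * z) / 2

lemma continuous_peak (ζ : ℂ) : Continuous (peak ζ) := by
  unfold peak
  fun_prop

lemma norm_peak_le_one {ζ z : ℂ} (hζ : ‖ζ‖ = 1) (hz : ‖z‖ ≤ 1) : ‖peak ζ z‖ ≤ 1 := by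
  have : ‖1 + starRingEnd ℂ ζ * z‖ ≤ 2 :=
    calc ‖1 + starRingEnd ℂ ζ * z‖ ≤ 1 + ‖z‖ := by
          simpa [hζ] using norm_add_le (1 : ℂ) (starRingEnd ℂ ζ * z)
      _ ≤ 2 := by linarith
  rw [peak, norm_div, RCLike.norm_ofNat]
  linarith

lemma norm_peak_lt_one {ζ w : ℂ} (hζ : ‖ζ‖ = 1) (hw : ‖w‖ ≤ 1) (hne : w ≠ ζ) :
    ‖peak ζ w‖ < 1 := by
  set u := starRingEnd ℂ ζ * w with hu_def
  have hu : ‖u‖ ≤ 1 := by simpa [u, hζ] using hw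
  have hu1 : (1 : ℂ) ≠ u := fun h => hne <| by
    have : ζ * u = w := by rw [hu_def, ← mul_assoc, mul_conj', hζ]; simp
    rw [← this, ← h, mul_one]
  have hpeak : peak ζ w = (1 / 2 : ℝ) • (1 + u) := by
    rw [peak, Complex.real_smul]; push_cast; ring
  rcases hu.lt_or_eq with hlt | heq
  · rw [hpeak, norm_smul, Real.norm_of_nonneg (by norm_num)]
    linarith [norm_add_le (1 : ℂ) u, norm_one (α := ℂ)]
  · simpa [hpeak] using (norm_midpoint_lt_iff (by simp [heq])).2 hu1

lemma norm_peak_ofReal_mul_self {ζ : ℂ} (hζ : ‖ζ‖ = 1) {t : ℝ} (ht : -1 ≤ t) :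
    ‖peak ζ (t * ζ)‖ = (1 + t) / 2 := by
  have : peak ζ (t * ζ) = ((1 + t) / 2 : ℝ) := by
    rw [peak, mul_left_comm, conj_mul', hζ]
    push_cast; ring
  rw [this, Complex.norm_real, Real.norm_of_nonneg (by linarith)]

lemma hasDerivAt_peak_pow (ζ z : ℂ) (k : ℕ) :
    HasDerivAt (fun w => peak ζ w ^ (k + 1))
      ((k + 1) * peak ζ z ^ k * (starRingEnd ℂ ζ / 2)) z := by
  have hpeak : HasDerivAt (peak ζ) (starRingEnd ℂ ζ / 2) z := by
    show HasDerivAt (fun w => (1 + starRingEnd ℂ ζ * w) / 2) _ z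
    simpa using (((hasDerivAt_id z).const_mul (starRingEnd ℂ ζ)).const_add 1).div_const 2
  simpa using hpeak.fun_pow (k + 1)

lemma norm_peak_pow_derivative {ζ : ℂ} (hζ : ‖ζ‖ = 1) (z : ℂ) (k : ℕ) :
    ‖((k : ℂ) + 1) * peak ζ z ^ k * (starRingEnd ℂ ζ / 2)‖ = (k + 1) * ‖peak ζ z‖ ^ k / 2 := by
  rw [norm_mul, norm_mul, norm_pow, norm_div, RCLike.norm_conj, hζ, RCLike.norm_ofNat,
    show ((k : ℂ) + 1) = ((k + 1 : ℕ) : ℂ) by push_cast; ring, Complex.norm_natCast]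
  push_cast
  ring

lemma norm_deriv_peak_pow {ζ : ℂ} (hζ : ‖ζ‖ = 1) (z : ℂ) (k : ℕ) :
    ‖deriv (fun w => peak ζ w ^ (k + 1)) z‖ = (k + 1) * ‖peak ζ z‖ ^ k / 2 := by
  rw [(hasDerivAt_peak_pow ζ z k).deriv, norm_peak_pow_derivative hζ]

lemma norm_deriv_peak_pow_comp {ζ z : ℂ} {φ : ℂ → ℂ} (hζ : ‖ζ‖ = 1)
    (hφ : DifferentiableAt ℂ φ z) (k : ℕ) :
    ‖deriv ((fun w => peak ζ w ^ (k + 1)) ∘ φ) z‖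
      = (k + 1) * ‖peak ζ (φ z)‖ ^ k / 2 * ‖deriv φ z‖ := by
  rw [((hasDerivAt_peak_pow ζ (φ z) k).comp z hφ.hasDerivAt).deriv, norm_mul,
    norm_peak_pow_derivative hζ]

lemma exists_norm_peak_comp_le {ζ : ℂ} {φ : ℂ → ℂ} {K : Set ℂ} (hζ : ‖ζ‖ = 1)
    (hK : IsCompact K) (hφ : ContinuousOn φ K) (hφK : MapsTo φ K (closedBall 0 1))
    (hζK : ζ ∉ φ '' K) : ∃ r < 1, ∀ z ∈ K, ‖peak ζ (φ z)‖ ≤ r := by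
  obtain ⟨δ, hδ, hle⟩ := hK.exists_forall_le' (f := fun z => 1 - ‖peak ζ (φ z)‖) (a := 0)
    ((continuous_const.sub (continuous_peak ζ).norm).comp_continuousOn hφ)
    fun z hz => sub_pos.2 <| norm_peak_lt_one hζ (mem_closedBall_zero_iff.1 (hφK hz))
      fun h => hζK ⟨z, hz, h⟩
  exact ⟨1 - δ, by linarith, fun z hz => by linarith [hle z hz]⟩

lemma isOpen_inter_peak_superlevel (ζ : ℂ) (s : ℝ) : IsOpen (UD ∩ {z | s < ‖peak ζ z‖}) :=
  isOpen_ball.inter (isOpen_lt continuous_const (continuous_peak ζ).norm)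

lemma toReal_volume_peak_superlevel_pos {ζ : ℂ} {s : ℝ} (hζ : ‖ζ‖ = 1) (hs₀ : 0 ≤ s)
    (hs₁ : s < 1) : 0 < (volume (UD ∩ {z | s < ‖peak ζ z‖})).toReal := by
  have hmem : (s : ℂ) * ζ ∈ UD ∩ {z | s < ‖peak ζ z‖} := by
    refine ⟨?_, ?_⟩
    · rw [UD, mem_ball_zero_iff, norm_mul, hζ, Complex.norm_real, Real.norm_of_nonneg hs₀]
      linarith
    · show s < ‖peak ζ (s * ζ)‖
      rw [norm_peak_ofReal_mul_self hζ (by linarith)]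
      linarith
  exact ENNReal.toReal_pos
    ((isOpen_inter_peak_superlevel ζ s).measure_pos volume ⟨_, hmem⟩).ne'
    ((measure_mono inter_subset_left).trans_lt measure_ball_lt_top).ne

lemma Dnorm2_peak_pow_ne_top {ζ : ℂ} (hζ : ‖ζ‖ = 1) (k : ℕ) :
    Dnorm2 (fun w => peak ζ w ^ (k + 1)) ≠ ⊤ :=
  Dnorm2_ne_top (b₀ := 1) (b := (k + 1) / 2)
    (by simpa using pow_le_one₀ (n := k + 1) (norm_nonneg _) (norm_peak_le_one hζ (by simp)))
    fun z hz => by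
      have := pow_le_one₀ (n := k) (norm_nonneg _)
        (norm_peak_le_one hζ (mem_ball_zero_iff.1 hz).le)
      rw [norm_deriv_peak_pow hζ]
      gcongr
      simpa using mul_le_mul_of_nonneg_left this (by positivity : (0 : ℝ) ≤ k + 1)

lemma le_toReal_Dnorm2_peak_pow {ζ : ℂ} {s : ℝ} (hζ : ‖ζ‖ = 1) (hs : 0 ≤ s) (k : ℕ) :
    (k + 1) ^ 2 * ((volume (UD ∩ {z | s < ‖peak ζ z‖})).toReal / 4) * (s ^ 2) ^ k
      ≤ (Dnorm2 (fun w => peak ζ w ^ (k + 1))).toReal := by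
  have hle := le_toReal_Dnorm2 (Dnorm2_peak_pow_ne_top hζ k)
    (isOpen_inter_peak_superlevel ζ s).measurableSet inter_subset_left
    (b := (k + 1) * s ^ k / 2) (by positivity) fun z hz => by
      rw [norm_deriv_peak_pow hζ]
      gcongr
      exact hz.2.le
  calc _ = ((k + 1) * s ^ k / 2) ^ 2 * (volume (UD ∩ {z | s < ‖peak ζ z‖})).toReal := by ring
    _ ≤ _ := hle

lemma toReal_Dnorm2_peak_pow_comp_le {ζ : ℂ} {φ : ℂ → ℂ} {r M : ℝ} (hζ : ‖ζ‖ = 1)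
    (hφ : ∀ z ∈ UD, DifferentiableAt ℂ φ z) (hr : ∀ z ∈ UD, ‖peak ζ (φ z)‖ ≤ r) (hr₁ : r ≤ 1)
    (hM : ∀ z ∈ UD, ‖deriv φ z‖ ≤ M) (k : ℕ) :
    (Dnorm2 ((fun w => peak ζ w ^ (k + 1)) ∘ φ)).toReal
      ≤ (k + 1) ^ 2 * (1 + M ^ 2 * (volume UD).toReal / 4) * (r ^ 2) ^ k := by
  have h0 : (0 : ℂ) ∈ UD := mem_ball_self one_pos
  have hr₀ : 0 ≤ r := (norm_nonneg _).trans (hr 0 h0)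
  have hbound := toReal_Dnorm2_le (f := (fun w => peak ζ w ^ (k + 1)) ∘ φ)
    (b₀ := r ^ (k + 1)) (b := (k + 1) * r ^ k / 2 * M)
    (by simpa using pow_le_pow_left₀ (norm_nonneg _) (hr 0 h0) (k + 1))
    fun z hz => by
      rw [norm_deriv_peak_pow_comp hζ (hφ z hz)]
      gcongr
      exacts [hr z hz, hM z hz]
  have hr2k : (r ^ (k + 1)) ^ 2 ≤ (k + 1) ^ 2 * (r ^ 2) ^ k :=
    calc (r ^ (k + 1)) ^ 2 = r ^ 2 * (r ^ 2) ^ k := by ring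
      _ ≤ 1 * (r ^ 2) ^ k := by gcongr; exact pow_le_one₀ hr₀ hr₁
      _ ≤ (k + 1) ^ 2 * (r ^ 2) ^ k := by gcongr; exact one_le_pow₀ (by simp)
  calc _ ≤ _ := hbound
    _ = (r ^ (k + 1)) ^ 2 + (k + 1) ^ 2 * (r ^ 2) ^ k * (M ^ 2 * (volume UD).toReal / 4) := by
        ring
    _ ≤ _ := by linarith

/-- if φ is holomorphic on a neighborhood of the closed disc, maps 𝔻 into 𝔻,
and 𝕋 ⊄ φ(closure 𝔻), then C_φ is not bounded below: there are f_k in the Dirichlet space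
with ‖C_φ f_k‖²/‖f_k‖² → 0; hence C_φ does not have closed range. -/
theorem stmt17 (φ : ℂ → ℂ) (U : Set ℂ) (hU : IsOpen U) (hclU : closure UD ⊆ U)
    (hφ : DifferentiableOn ℂ φ U) (hmaps : MapsTo φ UD UD)
    (hT : ¬ Metric.sphere (0 : ℂ) 1 ⊆ φ '' closure UD) :
    ∃ f : ℕ → ℂ → ℂ, (∀ k, DifferentiableOn ℂ (f k) UD) ∧
      (∀ k, Dnorm2 (f k) ≠ 0) ∧ (∀ k, Dnorm2 (f k) ≠ ⊤) ∧
      Tendsto (fun k => (Dnorm2 (f k ∘ φ)).toReal / (Dnorm2 (f k)).toReal)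
        atTop (nhds 0) := by
  obtain ⟨ζ, hζ, hζφ⟩ := not_subset.mp hT
  rw [mem_sphere_zero_iff_norm] at hζ
  have hφK : MapsTo φ (closedBall 0 1) (closedBall 0 1) := by
    simpa only [closure_UD] using hmaps.closure_of_continuousOn (hφ.continuousOn.mono hclU)
  rw [closure_UD] at hclU hζφ
  have hφan : AnalyticOnNhd ℂ φ U := hφ.analyticOnNhd hU
  obtain ⟨r, hr₁, hr⟩ := exists_norm_peak_comp_le hζ (isCompact_closedBall 0 1)
    (hφ.continuousOn.mono hclU) hφK hζφ
  obtain ⟨M, hM⟩ := (isCompact_closedBall 0 1).exists_bound_of_continuousOn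
    (hφan.deriv.continuousOn.mono hclU)
  have hr₀ : 0 ≤ r := (norm_nonneg _).trans (hr 0 (mem_closedBall_self zero_le_one))
  obtain ⟨s, hrs, hs₁⟩ := exists_between hr₁
  have hUD : UD ⊆ closedBall 0 1 := ball_subset_closedBall
  refine ⟨fun k w => peak ζ w ^ (k + 1),
    fun k z _ => (hasDerivAt_peak_pow ζ z k).differentiableAt.differentiableWithinAt,
    fun k => Dnorm2_ne_zero (by simp [peak]), Dnorm2_peak_pow_ne_top hζ, ?_⟩
  exact tendsto_div_zero_of_le_geometric (u := fun k => ((k : ℝ) + 1) ^ 2)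
    (fun k => ENNReal.toReal_nonneg)
    (toReal_Dnorm2_peak_pow_comp_le hζ (fun z hz => (hφan z (hclU (hUD hz))).differentiableAt)
      (fun z hz => hr z (hUD hz)) hr₁.le (fun z hz => hM z (hUD hz)))
    (le_toReal_Dnorm2_peak_pow hζ (hr₀.trans hrs.le)) (fun k => by positivity)
    (div_pos (toReal_volume_peak_superlevel_pos hζ (hr₀.trans hrs.le) hs₁) four_pos)
    (sq_nonneg r) (pow_lt_pow_left₀ hrs hr₀ two_ne_zero)
end
end

section
/- Let φ : 𝔻 → 𝔻 be a holomorphic injection (so n_φ ≤ 1) whose image is Ω = 𝔻 ∖ closure(𝔻_ζ), where 𝔻_ζ is an open disc internally tangent to 𝕋 at ζ ∈ 𝕋. Then the area condition fails: there is no pair δ > 0, r > 0 with A(φ(𝔻) ∩ D(z,r)) ≥ δ·A(D(z,r)) for all z ∈ 𝔻. In particular, for z → ζ radially inside 𝔻_ζ, the ratio A(Ω ∩ D(z,r))/A(D(z,r)) → 0. -/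
/-!
The Bergman ball `D(z, r)` is the pseudo-hyperbolic disc of radius `tanh r` about `z`, so it
contains and is contained in Euclidean discs about `z` of radius `≍ 1 - |z|`. Along the radius
`z = (1 - t) ζ` its area is therefore `≍ t ^ 2`. On the other hand, near `ζ` the domain `Ω` is
squeezed between the unit circle and the tangent circle `∂𝔻_ζ`: within distance `ρ ≍ t` of `z`
it lies in a `ρ ^ 2 / s` by `2 ρ` rectangle, of area `O(t ^ 3)`. So
`A(Ω ∩ D(z, r)) / A(D(z, r)) = O(t) → 0`, which rules out any uniform lower bound `δ`.
-/

open MeasureTheory Metric Complex Filter Set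
open scoped ENNReal NNReal

noncomputable section

open ComplexConjugate Topology

lemma mem_UD_iff {w : ℂ} : w ∈ UD ↔ ‖w‖ < 1 := mem_ball_zero_iff

lemma normSq_one_sub_conj_mul_sub_normSq_sub (z w : ℂ) :
    normSq (1 - conj z * w) - normSq (z - w) = (1 - normSq z) * (1 - normSq w) := by
  simp only [normSq_apply, sub_re, sub_im, mul_re, mul_im, one_re, one_im, conj_re, conj_im]
  ring

lemma norm_sub_lt_norm_one_sub_conj_mul {z w : ℂ} (hz : z ∈ UD) (hw : w ∈ UD) :
    ‖z - w‖ < ‖1 - conj z * w‖ := by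
  rw [mem_UD_iff] at hz hw
  have hsq : ‖z - w‖ ^ 2 < ‖1 - conj z * w‖ ^ 2 := by
    have := normSq_one_sub_conj_mul_sub_normSq_sub z w
    simp only [← Complex.sq_norm] at this
    nlinarith [mul_pos (sub_pos.2 (pow_lt_one₀ (norm_nonneg z) hz two_ne_zero))
      (sub_pos.2 (pow_lt_one₀ (norm_nonneg w) hw two_ne_zero))]
  exact (pow_lt_pow_iff_left₀ (norm_nonneg _) (norm_nonneg _) two_ne_zero).1 hsq

lemma rho_lt_one {z w : ℂ} (hz : z ∈ UD) (hw : w ∈ UD) : rho z w < 1 := by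
  have h := norm_sub_lt_norm_one_sub_conj_mul hz hw
  rw [rho, norm_div, div_lt_one ((norm_nonneg _).trans_lt h)]
  exact h

lemma half_log_lt_iff_lt_tanh {ρ r : ℝ} (h0 : 0 ≤ ρ) (h1 : ρ < 1) :
    1 / 2 * Real.log ((1 + ρ) / (1 - ρ)) < r ↔ ρ < Real.tanh r := by
  rw [← Real.artanh_eq_half_log ⟨by linarith, h1.le⟩]
  conv_lhs => rw [← Real.artanh_tanh r]
  exact Real.artanh_lt_artanh_iff ⟨by linarith, h1⟩ ⟨Real.neg_one_lt_tanh r, Real.tanh_lt_one r⟩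

lemma Real.tanh_pos {r : ℝ} (hr : 0 < r) : 0 < Real.tanh r := by
  rw [Real.tanh_eq_sinh_div_cosh]
  exact div_pos (Real.sinh_pos_iff.2 hr) (Real.cosh_pos r)

lemma mem_bergmanBall_iff {z w : ℂ} {r : ℝ} (hz : z ∈ UD) :
    w ∈ bergmanBall z r ↔ w ∈ UD ∧ rho z w < Real.tanh r := by
  exact and_congr_right fun hw => half_log_lt_iff_lt_tanh (norm_nonneg _) (rho_lt_one hz hw)

lemma one_sub_norm_le_norm_one_sub_conj_mul (z : ℂ) {w : ℂ} (hw : ‖w‖ ≤ 1) :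
    1 - ‖z‖ ≤ ‖1 - conj z * w‖ :=
  calc 1 - ‖z‖ ≤ ‖(1 : ℂ)‖ - ‖conj z * w‖ := by
        rw [norm_one, norm_mul, norm_conj]; nlinarith [norm_nonneg z]
    _ ≤ ‖1 - conj z * w‖ := norm_sub_norm_le _ _

lemma norm_one_sub_conj_mul_le {z : ℂ} (hz : ‖z‖ ≤ 1) (w : ℂ) :
    ‖1 - conj z * w‖ ≤ (1 - ‖z‖ ^ 2) + ‖z‖ * ‖z - w‖ := by
  have hsplit : 1 - conj z * w = ((1 - ‖z‖ ^ 2 : ℝ) : ℂ) + conj z * (z - w) := by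
    push_cast; rw [← conj_mul']; ring
  rw [hsplit]
  refine (norm_add_le _ _).trans_eq ?_
  rw [norm_real, Real.norm_of_nonneg (by nlinarith [norm_nonneg z]), norm_mul, norm_conj]

lemma ball_subset_bergmanBall {z : ℂ} (hz : z ∈ UD) (r : ℝ) :
    ball z (Real.tanh r * (1 - ‖z‖)) ⊆ bergmanBall z r := by
  intro w hw
  rw [mem_ball, dist_eq] at hw
  have hz' := mem_UD_iff.1 hz
  have hτ : 0 < Real.tanh r := by
    by_contra! h
    nlinarith [norm_nonneg (w - z)]
  have hτ1 := Real.tanh_lt_one r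
  have hw1 : ‖w‖ < 1 := by
    nlinarith [norm_le_norm_add_norm_sub' w z]
  have hB := one_sub_norm_le_norm_one_sub_conj_mul z hw1.le
  refine (mem_bergmanBall_iff hz).2 ⟨mem_UD_iff.2 hw1, ?_⟩
  rw [rho, norm_div, div_lt_iff₀ (by linarith), norm_sub_rev]
  nlinarith

lemma bergmanBall_subset_closedBall {z : ℂ} (hz : z ∈ UD) (r : ℝ) :
    bergmanBall z r ⊆
      closedBall z (2 * Real.tanh r / (1 - Real.tanh r) * (1 - ‖z‖)) := by
  intro w hw
  obtain ⟨hw, hρ⟩ := (mem_bergmanBall_iff hz).1 hw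
  have hz' := mem_UD_iff.1 hz
  have hdB := norm_sub_lt_norm_one_sub_conj_mul hz hw
  have hB := norm_one_sub_conj_mul_le hz'.le w
  have hτ1 := Real.tanh_lt_one r
  rw [rho, norm_div, div_lt_iff₀ ((norm_nonneg _).trans_lt hdB)] at hρ
  have hτ : 0 < Real.tanh r := by
    by_contra! h
    nlinarith [norm_nonneg (z - w), norm_nonneg (1 - conj z * w)]
  rw [mem_closedBall, dist_eq, norm_sub_rev, div_mul_eq_mul_div, le_div_iff₀ (by linarith)]
  calc ‖z - w‖ * (1 - Real.tanh r)
      ≤ ‖z - w‖ * (1 - Real.tanh r * ‖z‖) := by gcongr; nlinarith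
    _ ≤ Real.tanh r * (1 - ‖z‖) * (1 + ‖z‖) := by nlinarith
    _ ≤ 2 * Real.tanh r * (1 - ‖z‖) := by
        nlinarith [mul_pos hτ (sub_pos.2 hz')]

lemma volume_bergmanBall_lt_top (z : ℂ) (r : ℝ) : volume (bergmanBall z r) < ⊤ :=
  (measure_mono fun _ hw => hw.1).trans_lt measure_ball_lt_top

lemma pi_mul_sq_le_volume_bergmanBall {z : ℂ} (hz : z ∈ UD) {r : ℝ} (hr : 0 < r) :
    Real.pi * (Real.tanh r * (1 - ‖z‖)) ^ 2 ≤ (volume (bergmanBall z r)).toReal := by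
  have hrad : 0 ≤ Real.tanh r * (1 - ‖z‖) :=
    mul_nonneg (Real.tanh_pos hr).le (by linarith [mem_UD_iff.1 hz])
  calc Real.pi * (Real.tanh r * (1 - ‖z‖)) ^ 2
      = (volume (ball z (Real.tanh r * (1 - ‖z‖)))).toReal := by
        rw [Complex.volume_ball, ENNReal.toReal_mul, ENNReal.toReal_pow,
          ENNReal.toReal_ofReal hrad, ENNReal.coe_toReal, NNReal.coe_real_pi, mul_comm]
    _ ≤ (volume (bergmanBall z r)).toReal :=
        ENNReal.toReal_mono (volume_bergmanBall_lt_top z r).ne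
          (measure_mono (ball_subset_bergmanBall hz r))

/-- The domain `Ω = 𝔻 ∖ closure 𝔻_ζ`. -/
def tangentDiscCompl (ζ : ℂ) (s : ℝ) : Set ℂ :=
  UD \ closure (ball (((1 - s : ℝ) : ℂ) * ζ) s)

lemma mem_Icc_reProdIm_Icc_of_outside_tangentDisc {s t ρ : ℝ} {v : ℂ} (hs : 0 < s)
    (hts : t + ρ ≤ s) (hv : ‖v‖ < 1) (hout : s < ‖v - (1 - s : ℝ)‖)
    (hnear : ‖v - (1 - t : ℝ)‖ ≤ ρ) :
    v ∈ Icc (1 - ρ ^ 2 / s) 1 ×ℂ Icc (-ρ) ρ := by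
  have hsq : ∀ a : ℝ, ‖v - a‖ ^ 2 = (v.re - a) ^ 2 + v.im ^ 2 := fun a => by
    rw [Complex.sq_norm, normSq_apply, sub_re, sub_im, ofReal_re, ofReal_im, sub_zero]
    ring
  have hy : |v.im| ≤ ρ := by simpa using (abs_im_le_norm (v - (1 - t : ℝ))).trans hnear
  have hx : |v.re - (1 - t)| ≤ ρ := by simpa using (abs_re_le_norm (v - (1 - t : ℝ))).trans hnear
  have hxs : 0 ≤ v.re - (1 - s) := by linarith [(abs_le.1 hx).1]
  have hdisc : s ^ 2 ≤ (v.re - (1 - s)) ^ 2 + v.im ^ 2 := by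
    rw [← hsq]; gcongr
  have hy2 : v.im ^ 2 ≤ ρ ^ 2 := sq_le_sq' (abs_le.1 hy).1 (abs_le.1 hy).2
  -- `√(s ^ 2 - y ^ 2) ≥ s - y ^ 2 / s`: near `1` the tangent circle stays right of the parabola
  -- `re = 1 - im ^ 2 / s`
  have hpar : s ^ 2 - v.im ^ 2 ≤ s * (v.re - (1 - s)) := by
    nlinarith [sq_nonneg (v.re - (1 - s) - s)]
  refine mem_reProdIm.2 ⟨⟨?_, (re_le_norm v).trans hv.le⟩, abs_le.1 hy⟩
  rw [sub_le_comm, le_div_iff₀ hs]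
  nlinarith

lemma volume_Icc_reProdIm_Icc (a b c d : ℝ) :
    volume (Icc a b ×ℂ Icc c d) = ENNReal.ofReal (b - a) * ENNReal.ofReal (d - c) := by
  have h : Icc a b ×ℂ Icc c d = measurableEquivRealProd ⁻¹' (Icc a b ×ˢ Icc c d) := rfl
  rw [h, volume_preserving_equiv_real_prod.measure_preimage
      (measurableSet_Icc.prod measurableSet_Icc).nullMeasurableSet,
    Measure.volume_eq_prod, Measure.prod_prod, Real.volume_Icc, Real.volume_Icc]

lemma volume_tangentDiscCompl_inter_closedBall_le {ζ : ℂ} (hζ : ‖ζ‖ = 1) {s t ρ : ℝ}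
    (hs : 0 < s) (hts : t + ρ ≤ s) :
    volume (tangentDiscCompl ζ s ∩ closedBall (((1 - t : ℝ) : ℂ) * ζ) ρ)
      ≤ ENNReal.ofReal (2 * ρ ^ 3 / s) := by
  let c : Circle := ⟨conj ζ, by simp [Submonoid.unitSphere, hζ]⟩
  have hrot : ∀ (w : ℂ) (a : ℝ), ‖rotation c w - a‖ = ‖w - a * ζ‖ := fun w a => by
    have hζζ : conj ζ * ζ = 1 := by rw [conj_mul', hζ]; norm_num
    rw [rotation_apply, show (c : ℂ) = conj ζ from rfl,
      show conj ζ * w - a = conj ζ * (w - a * ζ) by linear_combination (a : ℂ) * hζζ,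
      norm_mul, norm_conj, hζ, one_mul]
  have hsub : tangentDiscCompl ζ s ∩ closedBall (((1 - t : ℝ) : ℂ) * ζ) ρ
      ⊆ rotation c ⁻¹' (Icc (1 - ρ ^ 2 / s) 1 ×ℂ Icc (-ρ) ρ) := by
    rintro w ⟨⟨hw, hout⟩, hnear⟩
    rw [closure_ball _ hs.ne', mem_closedBall, dist_eq, not_le] at hout
    rw [mem_closedBall, dist_eq] at hnear
    refine mem_Icc_reProdIm_Icc_of_outside_tangentDisc hs hts ?_ ?_ ?_
    · rw [LinearIsometryEquiv.norm_map]; exact mem_UD_iff.1 hw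
    · rwa [hrot]
    · rwa [hrot]
  calc volume (tangentDiscCompl ζ s ∩ closedBall (((1 - t : ℝ) : ℂ) * ζ) ρ)
      ≤ volume (rotation c ⁻¹' (Icc (1 - ρ ^ 2 / s) 1 ×ℂ Icc (-ρ) ρ)) := measure_mono hsub
    _ = volume (Icc (1 - ρ ^ 2 / s) 1 ×ℂ Icc (-ρ) ρ) :=
        (rotation c).measurePreserving.measure_preimage <|
          ((measurable_re measurableSet_Icc).inter
            (measurable_im measurableSet_Icc)).nullMeasurableSet
    _ = ENNReal.ofReal (2 * ρ ^ 3 / s) := by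
        rw [volume_Icc_reProdIm_Icc, sub_sub_cancel, ← ENNReal.ofReal_mul (by positivity)]
        ring_nf

lemma norm_ofReal_mul_of_norm_eq_one {ζ : ℂ} (hζ : ‖ζ‖ = 1) {a : ℝ} (ha : 0 ≤ a) :
    ‖(a : ℂ) * ζ‖ = a := by
  rw [norm_mul, norm_real, Real.norm_of_nonneg ha, hζ, mul_one]

theorem tendsto_volume_tangentDiscCompl_inter_bergmanBall_div {ζ : ℂ} (hζ : ‖ζ‖ = 1) {s : ℝ}
    (hs : 0 < s) {r : ℝ} (hr : 0 < r) :
    Tendsto (fun t : ℝ =>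
        (volume (tangentDiscCompl ζ s ∩ bergmanBall (((1 - t : ℝ) : ℂ) * ζ) r)).toReal /
        (volume (bergmanBall (((1 - t : ℝ) : ℂ) * ζ) r)).toReal) (𝓝[>] 0) (𝓝 0) := by
  set τ := Real.tanh r
  have hτ : 0 < τ := Real.tanh_pos hr
  have hτ1 : τ < 1 := Real.tanh_lt_one r
  set C := 2 * τ / (1 - τ)
  have hC : 0 < C := div_pos (by positivity) (by linarith)
  refine squeeze_zero' (g := fun t => 2 * C ^ 3 / (s * Real.pi * τ ^ 2) * t)
    (Eventually.of_forall fun t => by positivity) ?_ ?_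
  · filter_upwards [Ioo_mem_nhdsGT (show (0 : ℝ) < min 1 (s / (1 + C)) by positivity)]
      with t ⟨ht0, ht⟩
    have ht1 : t < 1 := ht.trans_le (min_le_left _ _)
    have hts : t + C * t ≤ s := by
      have := (lt_div_iff₀ (by positivity)).1 (ht.trans_le (min_le_right _ _))
      linarith
    have hnorm := norm_ofReal_mul_of_norm_eq_one hζ (a := 1 - t) (by linarith)
    have hz : ((1 - t : ℝ) : ℂ) * ζ ∈ UD := mem_UD_iff.2 (by linarith)
    have hnum : (volume (tangentDiscCompl ζ s ∩ bergmanBall (((1 - t : ℝ) : ℂ) * ζ) r)).toReal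
        ≤ 2 * (C * t) ^ 3 / s := by
      refine ENNReal.toReal_le_of_le_ofReal (by positivity) ?_
      refine (measure_mono (inter_subset_inter_right _
        (bergmanBall_subset_closedBall hz r))).trans ?_
      rw [hnorm, sub_sub_cancel]
      exact volume_tangentDiscCompl_inter_closedBall_le hζ hs hts
    have hden := pi_mul_sq_le_volume_bergmanBall hz hr
    rw [hnorm, sub_sub_cancel] at hden
    calc _ ≤ 2 * (C * t) ^ 3 / s / (Real.pi * (τ * t) ^ 2) :=
          div_le_div₀ (by positivity) hnum (by positivity) hden
      _ = 2 * C ^ 3 / (s * Real.pi * τ ^ 2) * t := by field_simp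
  · exact tendsto_nhdsWithin_of_tendsto_nhds <| by
      simpa using (continuous_const_mul (M := ℝ) _).tendsto 0

lemma not_exists_area_condition_of_tendsto {A : Set ℂ} {l : Filter ℝ} [l.NeBot] {z : ℝ → ℂ}
    (hz : ∀ᶠ t in l, z t ∈ UD)
    (hA : ∀ r : ℝ, 0 < r → Tendsto (fun t =>
      (volume (A ∩ bergmanBall (z t) r)).toReal / (volume (bergmanBall (z t) r)).toReal) l (𝓝 0)) :
    ¬ ∃ δ r : ℝ, 0 < δ ∧ 0 < r ∧ ∀ w ∈ UD,
        ENNReal.ofReal δ * volume (bergmanBall w r) ≤ volume (A ∩ bergmanBall w r) := by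
  rintro ⟨δ, r, hδ, hr, H⟩
  obtain ⟨t, hlt, hzt⟩ := (((hA r hr).eventually (gt_mem_nhds hδ)).and hz).exists
  have hpos : 0 < (volume (bergmanBall (z t) r)).toReal := by
    refine lt_of_lt_of_le ?_ (pi_mul_sq_le_volume_bergmanBall hzt hr)
    have := Real.tanh_pos hr
    have := mem_UD_iff.1 hzt
    have : 0 < 1 - ‖z t‖ := by linarith
    positivity
  have hge : δ * (volume (bergmanBall (z t) r)).toReal
      ≤ (volume (A ∩ bergmanBall (z t) r)).toReal := by
    have hfin := (measure_mono (inter_subset_right (s := A))).trans_lt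
      (volume_bergmanBall_lt_top (z t) r)
    simpa [ENNReal.toReal_mul, ENNReal.toReal_ofReal hδ.le] using
      ENNReal.toReal_mono hfin.ne (H _ hzt)
  rw [div_lt_iff₀ hpos] at hlt
  linarith

theorem stmt18_general (ζ : ℂ) (hζ : ‖ζ‖ = 1) (s : ℝ) (hs0 : 0 < s)
    (Ω : Set ℂ) (hΩ : Ω = UD \ closure (Metric.ball (((1 - s : ℝ) : ℂ) * ζ) s))
    (φ : ℂ → ℂ) (him : φ '' UD = Ω) :
    (¬ ∃ δ r : ℝ, 0 < δ ∧ 0 < r ∧ ∀ z ∈ UD,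
        ENNReal.ofReal δ * volume (bergmanBall z r) ≤ volume (φ '' UD ∩ bergmanBall z r)) ∧
    (∀ r : ℝ, 0 < r →
      Tendsto (fun t : ℝ =>
          (volume (Ω ∩ bergmanBall (((1 - t : ℝ) : ℂ) * ζ) r)).toReal /
          (volume (bergmanBall (((1 - t : ℝ) : ℂ) * ζ) r)).toReal)
        (nhdsWithin 0 (Set.Ioi 0)) (nhds 0)) := by
  rw [him, hΩ]
  have hlim := fun r (hr : 0 < r) =>
    tendsto_volume_tangentDiscCompl_inter_bergmanBall_div hζ hs0 hr
  refine ⟨not_exists_area_condition_of_tendsto ?_ hlim, hlim⟩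
  filter_upwards [Ioo_mem_nhdsGT one_pos] with t ht
  rw [mem_UD_iff, norm_ofReal_mul_of_norm_eq_one hζ (by linarith [ht.2])]
  linarith [ht.1]

/-- for a univalent φ whose image is Ω = 𝔻 ∖ closure(𝔻_ζ), with 𝔻_ζ a disc
internally tangent to 𝕋 at ζ, the area condition fails; in particular the ratio
A(Ω ∩ D(z,r))/A(D(z,r)) → 0 as z = (1−t)ζ → ζ radially. -/
theorem stmt18 (ζ : ℂ) (hζ : ‖ζ‖ = 1) (s : ℝ) (hs0 : 0 < s) (hs1 : s < 1)
    (Ω : Set ℂ) (hΩ : Ω = UD \ closure (Metric.ball (((1 - s : ℝ) : ℂ) * ζ) s))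
    (φ : ℂ → ℂ) (hφ : DifferentiableOn ℂ φ UD) (hinj : Set.InjOn φ UD)
    (him : φ '' UD = Ω) :
    (¬ ∃ δ r : ℝ, 0 < δ ∧ 0 < r ∧ ∀ z ∈ UD,
        ENNReal.ofReal δ * volume (bergmanBall z r) ≤ volume (φ '' UD ∩ bergmanBall z r)) ∧
    (∀ r : ℝ, 0 < r →
      Tendsto (fun t : ℝ =>
          (volume (Ω ∩ bergmanBall (((1 - t : ℝ) : ℂ) * ζ) r)).toReal /
          (volume (bergmanBall (((1 - t : ℝ) : ℂ) * ζ) r)).toReal)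
        (nhdsWithin 0 (Set.Ioi 0)) (nhds 0)) :=
  stmt18_general ζ hζ s hs0 Ω hΩ φ him
end
end
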